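/- arXiv:2308.06516 — 4 statements merged into one kernel-verified Lean document; each statement's English description precedes it below -/
import Mathlib

section
/- For a Runge--Kutta method applied to an ODE $\dot z = f(z)$ possessing a quadratic first integral $z^\top C z$ (where $C$ is symmetric and $z^\top C f(z) = 0$ for all $z$), one step satisfies the algebraic identity $z_1^\top C z_1 - z_0^\top C z_0 = 2h \sum_i b_i Z_i^\top C k_i + h^2 \sum_{i,j} M_{ij}\, k_i^\top C k_j$ where $M_{ij} = b_i b_j - b_i a_{ij} - b_j a_{ji}$, $k_i = f(Z_i)$, $Z_i = z_0 + h\sum_j a_{ij} k_j$, $z_1 = z_0 + h \sum_i b_i k_i$. Consequently, if $M = 0$ then $z_1^\top C z_1 = z_0^\top C z_0$. -/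
/-!
The identity holds for any symmetric bilinear form `B` and any vectors `kᵢ`. Expanding
`B(z₁, z₁)` with `z₁ = z₀ + h ∑ bᵢ kᵢ` gives a cross term `2h ∑ bᵢ B(z₀, kᵢ)`; writing
`z₀ = Zᵢ - h ∑ⱼ aᵢⱼ kⱼ` there and using symmetry to collect the `h²` terms produces `M`.
Since `B(Zᵢ, f(Zᵢ)) = 0` for a first integral, `M = 0` forces `B(z₁, z₁) = B(z₀, z₀)`.
-/

theorem LinearMap.BilinForm.IsSymm.apply_add_smul_self {R M : Type*} [CommSemiring R]
    [AddCommMonoid M] [Module R M] {B : LinearMap.BilinForm R M} (hB : B.IsSymm) (x y : M)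
    (h : R) :
    B (x + h • y) (x + h • y) = B x x + 2 * h * B x y + h ^ 2 * B y y := by
  simp only [LinearMap.BilinForm.add_left, LinearMap.BilinForm.add_right,
    LinearMap.BilinForm.smul_left, LinearMap.BilinForm.smul_right, hB.eq y x]
  ring

section RungeKutta

open LinearMap.BilinForm

variable {R M ι : Type*} [CommRing R] [AddCommGroup M] [Module R M] [Fintype ι]

def rkAlgebraicStabilityMatrix (a : ι → ι → R) (b : ι → R) (i j : ι) : R :=
  b i * b j - b i * a i j - b j * a j i

variable (a : ι → ι → R) (b : ι → R) (k : ι → M)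

theorem rk_sum_weight_mul_apply_stage (B : LinearMap.BilinForm R M) {h : R} {z₀ : M} {Z : ι → M}
    (hZ : ∀ i, Z i = z₀ + h • ∑ j, a i j • k j) :
    ∑ i, b i * B (Z i) (k i)
      = B z₀ (∑ i, b i • k i) + h * ∑ i, ∑ j, b i * a i j * B (k j) (k i) := by
  simp only [hZ, add_left, smul_left, sum_left, sum_right, smul_right, mul_add,
    Finset.sum_add_distrib, Finset.mul_sum]
  congr 1
  refine Finset.sum_congr rfl fun i _ => Finset.sum_congr rfl fun j _ => ?_
  ring

theorem sum_rkAlgebraicStabilityMatrix_mul_apply {B : LinearMap.BilinForm R M} (hB : B.IsSymm) :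
    ∑ i, ∑ j, rkAlgebraicStabilityMatrix a b i j * B (k i) (k j)
      = B (∑ i, b i • k i) (∑ i, b i • k i) - 2 * ∑ i, ∑ j, b i * a i j * B (k j) (k i) := by
  have hswap : ∑ i, ∑ j, b j * a j i * B (k i) (k j) = ∑ i, ∑ j, b i * a i j * B (k j) (k i) :=
    Finset.sum_comm
  rw [two_mul]
  nth_rewrite 1 [← hswap]
  simp only [sum_left, sum_right, smul_left, smul_right, Finset.mul_sum, ← Finset.sum_add_distrib,
    ← Finset.sum_sub_distrib]
  refine Finset.sum_congr rfl fun i _ => Finset.sum_congr rfl fun j _ => ?_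
  rw [rkAlgebraicStabilityMatrix, hB.eq (k j) (k i)]
  ring

theorem rk_step_apply_self_sub_apply_self {B : LinearMap.BilinForm R M} (hB : B.IsSymm) {h : R}
    {z₀ z₁ : M} {Z : ι → M} (hZ : ∀ i, Z i = z₀ + h • ∑ j, a i j • k j)
    (hz₁ : z₁ = z₀ + h • ∑ i, b i • k i) :
    B z₁ z₁ - B z₀ z₀ = 2 * h * ∑ i, b i * B (Z i) (k i)
      + h ^ 2 * ∑ i, ∑ j, rkAlgebraicStabilityMatrix a b i j * B (k i) (k j) := by
  rw [hz₁, hB.apply_add_smul_self, rk_sum_weight_mul_apply_stage a b k B hZ,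
    sum_rkAlgebraicStabilityMatrix_mul_apply a b k hB]
  ring

end RungeKutta

/-- For an RK method applied to `ż = f(z)` with quadratic first integral
`zᵀCz` (`C` symmetric, `zᵀC f(z) = 0`), one step satisfies
`z₁ᵀCz₁ - z₀ᵀCz₀ = 2h Σᵢ bᵢ Zᵢᵀ C kᵢ + h² Σᵢⱼ M_{ij} kᵢᵀ C kⱼ` with
`M_{ij} = bᵢbⱼ - bᵢa_{ij} - bⱼa_{ji}`; consequently if `M = 0` then `z₁ᵀCz₁ = z₀ᵀCz₀`. -/
theorem rk_quadratic_invariant_identity (d s : ℕ)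
    (a : Fin s → Fin s → ℝ) (b : Fin s → ℝ)
    (C : Matrix (Fin d) (Fin d) ℝ) (hC : C.IsSymm)
    (f : (Fin d → ℝ) → (Fin d → ℝ))
    (hf : ∀ z, z ⬝ᵥ C.mulVec (f z) = 0)
    (h : ℝ) (z0 : Fin d → ℝ)
    (Z : Fin s → (Fin d → ℝ))
    (hZ : ∀ i, Z i = z0 + h • ∑ j, a i j • f (Z j))
    (z1 : Fin d → ℝ)
    (hz1 : z1 = z0 + h • ∑ i, b i • f (Z i)) :
    z1 ⬝ᵥ C.mulVec z1 - z0 ⬝ᵥ C.mulVec z0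
        = 2 * h * ∑ i, b i * (Z i ⬝ᵥ C.mulVec (f (Z i)))
          + h ^ 2 * ∑ i, ∑ j, (b i * b j - b i * a i j - b j * a j i) *
              (f (Z i) ⬝ᵥ C.mulVec (f (Z j))) ∧
      ((∀ i j, b i * b j - b i * a i j - b j * a j i = 0) →
        z1 ⬝ᵥ C.mulVec z1 = z0 ⬝ᵥ C.mulVec z0) := by
  have hstep := rk_step_apply_self_sub_apply_self a b (fun i => f (Z i))
    (Matrix.isSymm_toBilin'_iff_isSymm.mpr hC) hZ hz1
  simp only [Matrix.toBilin'_apply', rkAlgebraicStabilityMatrix] at hstep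
  refine ⟨hstep, fun hM => ?_⟩
  simp only [hf, hM, zero_mul, mul_zero, Finset.sum_const_zero, add_zero] at hstep
  exact sub_eq_zero.mp hstep
end

section
/- Let $s \geq 1$, $a_1, \dots, a_s \in \mathbb{R}$, and define $b_i = a_i/2$, and the $s \times s$ matrix $A = L + \tfrac14 u v^\top$ where $L_{ij} = a_j$ if $j < i$ and $i - j$ is odd, $L_{ij} = 0$ otherwise; $u_i = (-1)^i$; $v_j = a_j (-1)^j$. Then $b_i b_j - b_i A_{ij} - b_j A_{ji} = 0$ for all $i, j$, i.e., the method $(A, b)$ is a symplectic Runge--Kutta method. -/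
/-! Writing `ε = (-1)^(i+j)`, the rank-one part of `A` contributes `ε aᵢaⱼ/4` to
`bᵢAᵢⱼ + bⱼAⱼᵢ`, while `L` contributes `aᵢaⱼ/2` exactly when `i + j` is odd (then precisely one
of `Lᵢⱼ`, `Lⱼᵢ` is nonzero) and nothing otherwise, i.e. `(1 - ε) aᵢaⱼ/4`.
The total is `aᵢaⱼ/4 = bᵢbⱼ`. -/

lemma Nat.odd_sub_iff_odd_add {m n : ℕ} (h : n ≤ m) : Odd (m - n) ↔ Odd (n + m) := by
  rw [Nat.odd_sub h, Nat.odd_add']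

lemma ite_odd_eq_neg_one_pow (n : ℕ) (x : ℝ) :
    (if Odd n then x else 0) = x * (1 - (-1) ^ n) / 2 := by
  rcases Nat.even_or_odd n with hn | hn
  · rw [if_neg (Nat.not_odd_iff_even.mpr hn), hn.neg_one_pow]
    ring
  · rw [if_pos hn, hn.neg_one_pow]
    ring

lemma mul_add_mul_swap_of_odd_gap {s : ℕ} (a : Fin s → ℝ) (L : Fin s → Fin s → ℝ)
    (hL : ∀ i j : Fin s,
      L i j = if (j : ℕ) < (i : ℕ) ∧ Odd ((i : ℕ) - (j : ℕ)) then a j else 0)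
    (i j : Fin s) :
    a i * L i j + a j * L j i = a i * a j * (1 - (-1) ^ ((i : ℕ) + j)) / 2 := by
  rw [← ite_odd_eq_neg_one_pow, hL, hL]
  rcases lt_trichotomy (i : ℕ) j with hij | hij | hij
  · simp only [hij, Nat.odd_sub_iff_odd_add hij.le, hij.not_gt, false_and, true_and,
      ↓reduceIte]
    split_ifs <;> ring
  · simp [hij]
  · simp only [hij, Nat.odd_sub_iff_odd_add hij.le, hij.not_gt, false_and, true_and,
      ↓reduceIte, Nat.add_comm (j : ℕ)]
    split_ifs <;> ring

theorem composition_symmetric_projection_symplectic_general (s : ℕ)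
    (a b : Fin s → ℝ) (hb : ∀ i, b i = a i / 2)
    (L A : Fin s → Fin s → ℝ)
    (hL : ∀ i j : Fin s,
      L i j = if (j : ℕ) < (i : ℕ) ∧ Odd ((i : ℕ) - (j : ℕ)) then a j else 0)
    (hA : ∀ i j : Fin s,
      A i j = L i j + (1/4 : ℝ) * ((-1 : ℝ) ^ ((i : ℕ) + 1)) *
        (a j * (-1 : ℝ) ^ ((j : ℕ) + 1))) :
    ∀ i j : Fin s, b i * b j - b i * A i j - b j * A j i = 0 := by
  intro i j
  rw [hb, hb, hA, hA]
  linear_combination (-1 / 2 : ℝ) * mul_add_mul_swap_of_odd_gap a L hL i j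

/-- For parameters `a₁,…,a_s` (1-indexed), `bᵢ = aᵢ/2` and
`A = L + ¼ u vᵀ` with `L_{ij} = aⱼ` for `j < i`, `i - j` odd, else `0`;
`uᵢ = (-1)ⁱ`, `vⱼ = aⱼ(-1)ʲ`. Then `(A, b)` is a symplectic RK method:
`bᵢbⱼ - bᵢA_{ij} - bⱼA_{ji} = 0` for all `i, j`. -/
theorem composition_symmetric_projection_symplectic (s : ℕ) (hs : 1 ≤ s)
    (a b : Fin s → ℝ) (hb : ∀ i, b i = a i / 2)
    (L A : Fin s → Fin s → ℝ)
    (hL : ∀ i j : Fin s,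
      L i j = if (j : ℕ) < (i : ℕ) ∧ Odd ((i : ℕ) - (j : ℕ)) then a j else 0)
    (hA : ∀ i j : Fin s,
      A i j = L i j + (1/4 : ℝ) * ((-1 : ℝ) ^ ((i : ℕ) + 1)) *
        (a j * (-1 : ℝ) ^ ((j : ℕ) + 1))) :
    ∀ i j : Fin s, b i * b j - b i * A i j - b j * A j i = 0 :=
  composition_symmetric_projection_symplectic_general s a b hb L A hL hA
end

section
/- With $A$ and $b$ as defined from parameters $a_1,\dots,a_s$ (namely $b_i = a_i/2$, $A = L + \tfrac14 uv^\top$ with $L_{ij} = a_j$ for $j<i$ with $i-j$ odd else $0$, $u_i = (-1)^i$, $v_j = a_j(-1)^j$), the identity $b_i A_{ij} = \tfrac12 b_i b_j c_{j-i}$ holds for all $i,j$, where $c_k = 1$ if $k$ is even, $c_k = -1$ if $k$ is odd and $k > 0$, and $c_k = 3$ if $k$ is odd and $k < 0$. -/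
/-!
Since `(-1)^(i+1) (-1)^(j+1) = (-1)^(i+j)`, we have `A i j = a j (χ + (-1)^(i+j) / 4)` with `χ` the
indicator of "`j < i` and `i - j` odd", so both sides equal `a i a j / 8` times a weight depending only
on `i, j`. The weight `4 χ + (-1)^(i+j)` is `1` when `j - i` is even, `-1` when `j - i` is odd and
positive, and `4 - 1 = 3` when `j - i` is odd and negative: exactly `c (j - i)`.
-/

def compositionWeight (k : ℤ) : ℝ := if Even k then 1 else if 0 < k then -1 else 3

theorem even_natCast_sub_iff_even_add (m n : ℕ) : Even ((n : ℤ) - m) ↔ Even (m + n) := by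
  rw [Int.even_sub, Nat.even_add, Int.even_coe_nat, Int.even_coe_nat]
  exact Iff.comm

theorem four_mul_indicator_add_neg_one_pow_eq_compositionWeight (m n : ℕ) :
    4 * (if n < m ∧ Odd (m - n) then 1 else 0) + (-1 : ℝ) ^ (m + n)
      = compositionWeight ((n : ℤ) - m) := by
  unfold compositionWeight
  rcases Nat.even_or_odd (m + n) with he | ho
  · have hnot : ¬(n < m ∧ Odd (m - n)) := fun ⟨hlt, hodd⟩ =>
      Nat.not_even_iff_odd.2 hodd ((Nat.even_sub hlt.le).2 (Nat.even_add.1 he))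
    rw [if_neg hnot, if_pos ((even_natCast_sub_iff_even_add m n).2 he), he.neg_one_pow]
    norm_num
  · have hsub : ¬Even ((n : ℤ) - m) := by
      rw [even_natCast_sub_iff_even_add]; exact Nat.not_even_iff_odd.2 ho
    rw [if_neg hsub, ho.neg_one_pow]
    rcases lt_or_ge n m with hlt | hle
    · have hodd : Odd (m - n) := by
        rw [← Nat.not_even_iff_odd, Nat.even_sub hlt.le, ← Nat.even_add]
        exact Nat.not_even_iff_odd.2 ho
      rw [if_pos ⟨hlt, hodd⟩, if_neg (show ¬(0 : ℤ) < n - m by omega)]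
      norm_num
    · have hne : n ≠ m := by rintro rfl; exact Nat.not_even_iff_odd.2 ho (by simp)
      rw [if_neg (show ¬(n < m ∧ Odd (m - n)) by omega), if_pos (show (0 : ℤ) < n - m by omega)]
      norm_num

theorem composition_method_coefficient_identity_general (s : ℕ)
    (a b : Fin s → ℝ) (hb : ∀ i, b i = a i / 2)
    (L A : Fin s → Fin s → ℝ)
    (hL : ∀ i j : Fin s,
      L i j = if (j : ℕ) < (i : ℕ) ∧ Odd ((i : ℕ) - (j : ℕ)) then a j else 0)
    (hA : ∀ i j : Fin s,
      A i j = L i j + (1/4 : ℝ) * ((-1 : ℝ) ^ ((i : ℕ) + 1)) *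
        (a j * (-1 : ℝ) ^ ((j : ℕ) + 1)))
    (c : ℤ → ℝ)
    (hc : ∀ k : ℤ, c k = if Even k then 1 else if 0 < k then -1 else 3) :
    ∀ i j : Fin s,
      b i * A i j = (1/2 : ℝ) * (b i * b j) * c ((j : ℕ) - (i : ℕ) : ℤ) := by
  intro i j
  have hL' : L i j = a j * (if (j : ℕ) < i ∧ Odd ((i : ℕ) - j) then 1 else 0) := by
    rw [hL, mul_ite, mul_one, mul_zero]
  have hc' : c ((j : ℕ) - (i : ℕ) : ℤ) = compositionWeight ((j : ℕ) - (i : ℕ) : ℤ) := hc _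
  rw [hb, hb, hA, hL', hc', ← four_mul_indicator_add_neg_one_pow_eq_compositionWeight, pow_add]
  ring

/-- With `A` and `b` as defined from `a₁,…,a_s` (1-indexed), the identity
`bᵢ A_{ij} = ½ bᵢ bⱼ c_{j-i}` holds, where `c_k = 1` for `k` even, `-1` for `k` odd
positive, and `3` for `k` odd negative. -/
theorem composition_method_coefficient_identity (s : ℕ) (hs : 1 ≤ s)
    (a b : Fin s → ℝ) (hb : ∀ i, b i = a i / 2)
    (L A : Fin s → Fin s → ℝ)
    (hL : ∀ i j : Fin s,
      L i j = if (j : ℕ) < (i : ℕ) ∧ Odd ((i : ℕ) - (j : ℕ)) then a j else 0)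
    (hA : ∀ i j : Fin s,
      A i j = L i j + (1/4 : ℝ) * ((-1 : ℝ) ^ ((i : ℕ) + 1)) *
        (a j * (-1 : ℝ) ^ ((j : ℕ) + 1)))
    (c : ℤ → ℝ)
    (hc : ∀ k : ℤ, c k = if Even k then 1 else if 0 < k then -1 else 3) :
    ∀ i j : Fin s,
      b i * A i j = (1/2 : ℝ) * (b i * b j) * c ((j : ℕ) - (i : ℕ) : ℤ) :=
  composition_method_coefficient_identity_general s a b hb L A hL hA c hc
end

section
/- For the symmetric projection of the leapfrog method on the duplicated system, the stages satisfy: with $Z_1 = z_0 - hk_4$, $Z_2 = z_0 + h(\tfrac12 k_1 + k_4)$, $Z_3 = z_0 + h(k_2 - k_4)$, $k_i = f(Z_i)$ for $i=1,2,3$, the projection condition $z^{**} + \mu = \hat z^* - \mu$ (with $\mu = h k_4$, $z^* = z_0 + \mu + \tfrac{h}{2}f(z_0 - \mu)$, $\hat z^* = z_0 - \mu + h f(z^*)$, $z^{**} = z^* + \tfrac{h}{2} f(\hat z^*)$) is equivalent to the linear constraint $-\tfrac12 k_1 + k_2 - \tfrac12 k_3 - 4k_4 = 0$, and then the output $z_1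 = z^{**} + \mu$ equals $z_0 + h(\tfrac14 k_1 + \tfrac12 k_2 + \tfrac14 k_3)$. -/
/-!
Writing `μ = h • k₄`, the substeps are the stages: `z* = Z₂` and then `ẑ* = Z₃`, so
`z** + μ = Z₂ + (h/2) • k₃ + h • k₄`. Both remaining claims are linear identities in
`k₁, …, k₄`: the defect `(z** + μ) - (ẑ* - μ)` is `-h` times the constraint, and
`(z** + μ) - z₁` is `-h/2` times it.
-/

section

variable {E : Type*} [AddCommGroup E] [Module ℝ E]

theorem projection_defect_eq (h : ℝ) (z0 k1 k2 k3 k4 : E) :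
    z0 + h • ((1/2 : ℝ) • k1 + k4) + (h / 2) • k3 + h • k4 - (z0 + h • (k2 - k4) - h • k4)
      = (-h) • (-(1/2 : ℝ) • k1 + k2 - (1/2 : ℝ) • k3 - (4 : ℝ) • k4) := by
  module

theorem projection_output_sub_eq (h : ℝ) (z0 k1 k2 k3 k4 : E) :
    z0 + h • ((1/2 : ℝ) • k1 + k4) + (h / 2) • k3 + h • k4
        - (z0 + h • ((1/4 : ℝ) • k1 + (1/2 : ℝ) • k2 + (1/4 : ℝ) • k3))
      = (-(h / 2)) • (-(1/2 : ℝ) • k1 + k2 - (1/2 : ℝ) • k3 - (4 : ℝ) • k4) := by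
  module

theorem projection_condition_iff_constraint {h : ℝ} (hh : h ≠ 0) (z0 k1 k2 k3 k4 : E) :
    z0 + h • ((1/2 : ℝ) • k1 + k4) + (h / 2) • k3 + h • k4 = z0 + h • (k2 - k4) - h • k4 ↔
      -(1/2 : ℝ) • k1 + k2 - (1/2 : ℝ) • k3 - (4 : ℝ) • k4 = 0 := by
  rw [← sub_eq_zero, projection_defect_eq, smul_eq_zero, or_iff_right (neg_ne_zero.mpr hh)]

theorem projection_output_eq_of_constraint (h : ℝ) {z0 k1 k2 k3 k4 : E}
    (hc : -(1/2 : ℝ) • k1 + k2 - (1/2 : ℝ) • k3 - (4 : ℝ) • k4 = 0) :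
    z0 + h • ((1/2 : ℝ) • k1 + k4) + (h / 2) • k3 + h • k4
      = z0 + h • ((1/4 : ℝ) • k1 + (1/2 : ℝ) • k2 + (1/4 : ℝ) • k3) := by
  rw [← sub_eq_zero, projection_output_sub_eq, hc, smul_zero]

end

/-- For the symmetric projection of the leapfrog method on the duplicated
system, with `k₄ = μ/h` and stages `Z₁ = z₀ - hk₄`, `Z₂ = z₀ + h(½k₁ + k₄)`,
`Z₃ = z₀ + h(k₂ - k₄)`, `kᵢ = f(Zᵢ)`, the projection condition `z** + μ = ẑ* - μ`
is equivalent to the constraint `-½k₁ + k₂ - ½k₃ - 4k₄ = 0`, and under the constraint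
the output `z₁ = z** + μ` equals `z₀ + h(¼k₁ + ½k₂ + ¼k₃)`. -/
theorem symmetric_projection_leapfrog_stages (d : ℕ)
    (f : (Fin d → ℝ) → (Fin d → ℝ)) (h : ℝ) (hh : h ≠ 0)
    (z0 μ : Fin d → ℝ) :
    let k4 := h⁻¹ • μ
    let Z1 := z0 - h • k4
    let k1 := f Z1
    let Z2 := z0 + h • ((1/2 : ℝ) • k1 + k4)
    let k2 := f Z2
    let Z3 := z0 + h • (k2 - k4)
    let k3 := f Z3
    let zstar := z0 + μ + (h / 2) • f (z0 - μ)
    let zhstar := z0 - μ + h • f zstar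
    let zstarstar := zstar + (h / 2) • f zhstar
    ((zstarstar + μ = zhstar - μ) ↔
      (-(1/2 : ℝ) • k1 + k2 - (1/2 : ℝ) • k3 - (4 : ℝ) • k4 = 0)) ∧
    ((-(1/2 : ℝ) • k1 + k2 - (1/2 : ℝ) • k3 - (4 : ℝ) • k4 = 0) →
      zstarstar + μ
        = z0 + h • ((1/4 : ℝ) • k1 + (1/2 : ℝ) • k2 + (1/4 : ℝ) • k3)) := by
  intro k4 Z1 k1 Z2 k2 Z3 k3 zstar zhstar zstarstar
  have hμ : μ = h • k4 := (smul_inv_smul₀ hh μ).symm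
  have hzstar : zstar = Z2 := by
    simp only [zstar, Z2, k1, Z1]
    rw [hμ]
    module
  have hzhstar : zhstar = Z3 := by
    simp only [zhstar, Z3, k2, hzstar]
    rw [hμ]
    module
  have hout : zstarstar + μ = Z2 + (h / 2) • k3 + h • k4 := by
    simp only [zstarstar, k3, hzstar, hzhstar, ← hμ]
  refine ⟨?_, fun hc => ?_⟩
  · rw [hout, hzhstar, hμ]
    exact projection_condition_iff_constraint hh z0 k1 k2 k3 k4
  · rw [hout]
    exact projection_output_eq_of_constraint h hc
end
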